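/- Let 0 < n < 1 and 0 < λ < (2−n)(1−n)/n, and set r₁ = 1 − nλ/((2−n)(1−n)), so r₁ > 0. Let F : ℝ³ → ℝ³ denote the vector field of the (p,q,r) system, i.e. F(p,q,r) = (p((r−1)/λ + 1 − n/(2−n) − λpr − λq/(2−n)), q(1 − λpr − λq/(2−n)) + npr, (r/n)((1−n)(r−1)/λ − 1 + n/(2−n) + λpr + λq/(2−n))). Then the Jacobian matrix of F at the equilibrium M₁ = (0, (2−n)/λ, r₁) has characteristic polynomial (X + 1)(X + n/(1−n))(X − (1−n)r₁/(λn)); it has exactly two strictly negative eigenvalues, −1 and −n/(1−n), and one strictly positive eigenvalue, (1−n)r₁/(λn), so M₁ is a saddle. -/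

import Mathlib

open Polynomial

/-- The vector field of the `(p,q,r)` system (with the third equation solved for `r'`). -/
noncomputable def Fvec (n lam : ℝ) (v : Fin 3 → ℝ) : Fin 3 → ℝ :=
  ![v 0 * ((v 2 - 1) / lam + 1 - n / (2 - n) - lam * v 0 * v 2 - lam * v 1 / (2 - n)),
    v 1 * (1 - lam * v 0 * v 2 - lam * v 1 / (2 - n)) + n * v 0 * v 2,
    (v 2 / n) * ((1 - n) * (v 2 - 1) / lam - 1 + n / (2 - n)
      + lam * v 0 * v 2 + lam * v 1 / (2 - n))]

/-- The Jacobian matrix of the `(p,q,r)` vector field at a point. -/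
noncomputable def Jac (n lam : ℝ) (x : Fin 3 → ℝ) : Matrix (Fin 3) (Fin 3) ℝ :=
  LinearMap.toMatrix' ((fderiv ℝ (Fvec n lam) x : (Fin 3 → ℝ) →L[ℝ] (Fin 3 → ℝ)) :
    (Fin 3 → ℝ) →ₗ[ℝ] (Fin 3 → ℝ))

/-! Every entry of the Jacobian above the diagonal carries a factor `p`, so on the invariant
plane `p = 0`, which contains `M₁`, the Jacobian is lower triangular and its eigenvalues are its
diagonal entries. At `q = (2 - n)/λ` we have `λq/(2 - n) = 1`, and with the value of `r₁` the
diagonal becomes `-n/(1 - n)`, `-1`, `(1 - n)r₁/(λn)`. -/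

theorem HasFDerivAt.div_const {𝕜 E : Type*} [NontriviallyNormedField 𝕜] [NormedAddCommGroup E]
    [NormedSpace 𝕜 E] {f : E → 𝕜} {f' : E →L[𝕜] 𝕜} {x : E} (h : HasFDerivAt f f' x) (c : 𝕜) :
    HasFDerivAt (fun y => f y / c) (c⁻¹ • f') x := by
  simpa only [div_eq_mul_inv, smul_eq_mul, mul_comm c⁻¹] using h.mul_const c⁻¹

namespace Matrix

variable {ι K : Type*} [Fintype ι] [DecidableEq ι] [LinearOrder ι]

theorem charpoly_of_isLowerTriangular [CommRing K] (M : Matrix ι ι K) (h : M.IsLowerTriangular) :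
    M.charpoly = ∏ i, (X - C (M i i)) := by
  simp [charpoly, det_of_isLowerTriangular _ (charmatrix_blockTriangular_iff.mpr h)]

theorem spectrum_of_isLowerTriangular [Field K] (M : Matrix ι ι K) (h : M.IsLowerTriangular) :
    spectrum K M = Set.range M.diag := by
  ext μ
  simp [mem_spectrum_iff_isRoot_charpoly, charpoly_of_isLowerTriangular M h, eval_prod,
    Finset.prod_eq_zero_iff, sub_eq_zero, eq_comm (a := μ)]

end Matrix

section PQRSystem

variable (n lam : ℝ)

noncomputable def fvecJacobian (v : Fin 3 → ℝ) : Matrix (Fin 3) (Fin 3) ℝ :=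
  !![(v 2 - 1) / lam + 1 - n / (2 - n) - 2 * lam * v 0 * v 2 - lam * v 1 / (2 - n),
      -(lam * v 0 / (2 - n)), v 0 * (1 / lam - lam * v 0);
    -(lam * v 1 * v 2) + n * v 2, 1 - lam * v 0 * v 2 - 2 * lam * v 1 / (2 - n),
      -(lam * v 0 * v 1) + n * v 0;
    v 2 / n * (lam * v 2), v 2 / n * (lam / (2 - n)),
      ((1 - n) * (v 2 - 1) / lam - 1 + n / (2 - n) + lam * v 0 * v 2 + lam * v 1 / (2 - n)) / n
        + v 2 / n * ((1 - n) / lam + lam * v 0)]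

theorem hasFDerivAt_fvec (v : Fin 3 → ℝ) :
    HasFDerivAt (Fvec n lam) (Matrix.toLin' (fvecJacobian n lam v)).toContinuousLinearMap v := by
  have hp := hasFDerivAt_apply (𝕜 := ℝ) (0 : Fin 3) v
  have hq := hasFDerivAt_apply (𝕜 := ℝ) (1 : Fin 3) v
  have hr := hasFDerivAt_apply (𝕜 := ℝ) (2 : Fin 3) v
  rw [hasFDerivAt_pi']
  intro i
  fin_cases i
  · refine (hp.mul (((((hr.sub_const 1).div_const lam).add_const 1).sub_const (n / (2 - n))).sub
      ((hp.const_mul lam).mul hr) |>.sub ((hq.const_mul lam).div_const (2 - n)))).congr_fderiv ?_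
    ext u
    simp [fvecJacobian, dotProduct, Fin.sum_univ_three]
    ring
  · refine ((hq.mul ((((hp.const_mul lam).mul hr).const_sub 1).sub
      ((hq.const_mul lam).div_const (2 - n)))).add ((hp.const_mul n).mul hr)).congr_fderiv ?_
    ext u
    simp [fvecJacobian, dotProduct, Fin.sum_univ_three]
    ring
  · refine ((hr.div_const n).mul ((((((hr.sub_const 1).const_mul (1 - n)).div_const lam).sub_const
      1).add_const (n / (2 - n))).add ((hp.const_mul lam).mul hr) |>.add
      ((hq.const_mul lam).div_const (2 - n)))).congr_fderiv ?_
    ext u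
    simp [fvecJacobian, dotProduct, Fin.sum_univ_three]
    ring

theorem jac_eq_fvecJacobian (v : Fin 3 → ℝ) : Jac n lam v = fvecJacobian n lam v := by
  rw [Jac, (hasFDerivAt_fvec n lam v).fderiv, LinearMap.coe_toContinuousLinearMap,
    LinearMap.toMatrix'_toLin']

variable {n lam}

theorem fvecJacobian_isLowerTriangular {v : Fin 3 → ℝ} (hp : v 0 = 0) :
    (fvecJacobian n lam v).IsLowerTriangular := by
  intro i j (hij : i < j)
  fin_cases i <;> fin_cases j <;> simp_all [fvecJacobian]

theorem fvecJacobian_diag_M₁ (hn1 : 1 - n ≠ 0) (hn2 : 2 - n ≠ 0) (hlam : lam ≠ 0) {r₁ : ℝ}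
    (hr₁ : r₁ = 1 - n * lam / ((2 - n) * (1 - n))) :
    (fvecJacobian n lam ![0, (2 - n) / lam, r₁]).diag =
      ![-(n / (1 - n)), -1, (1 - n) * r₁ / (lam * n)] := by
  ext i
  fin_cases i <;> simp [fvecJacobian, hr₁] <;> field_simp <;> ring

end PQRSystem

/-- the equilibrium `M₁` is a saddle, with two strictly negative eigenvalues
`-1`, `-n/(1-n)` and one strictly positive eigenvalue `(1-n)r₁/(λn)`. -/
theorem stmt17 (n lam : ℝ) (hn0 : 0 < n) (hn1 : n < 1) (hlam0 : 0 < lam)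
    (hlam1 : lam < (2 - n) * (1 - n) / n)
    (r₁ : ℝ) (hr₁ : r₁ = 1 - n * lam / ((2 - n) * (1 - n))) :
    0 < r₁ ∧
    (Jac n lam ![0, (2 - n) / lam, r₁]).charpoly =
      (X + C 1) * (X + C (n / (1 - n))) * (X - C ((1 - n) * r₁ / (lam * n))) ∧
    spectrum ℝ (Jac n lam ![0, (2 - n) / lam, r₁]) =
      {-1, -(n / (1 - n)), (1 - n) * r₁ / (lam * n)} ∧
    (-1 : ℝ) < 0 ∧ -(n / (1 - n)) < 0 ∧ 0 < (1 - n) * r₁ / (lam * n) := by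
  have h1n : 0 < 1 - n := by linarith
  have h2n : 0 < 2 - n := by linarith
  have hr₁_pos : 0 < r₁ := by
    rw [hr₁, sub_pos, div_lt_one (by positivity)]
    rwa [lt_div_iff₀ hn0, mul_comm] at hlam1
  have hJac := jac_eq_fvecJacobian n lam ![0, (2 - n) / lam, r₁]
  have hlower : (fvecJacobian n lam ![0, (2 - n) / lam, r₁]).IsLowerTriangular :=
    fvecJacobian_isLowerTriangular rfl
  have hdiag := fvecJacobian_diag_M₁ h1n.ne' h2n.ne' hlam0.ne' hr₁
  refine ⟨hr₁_pos, ?_, ?_, neg_one_lt_zero, neg_neg_of_pos (by positivity), by positivity⟩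
  · rw [hJac, Matrix.charpoly_of_isLowerTriangular _ hlower, Fin.prod_univ_three]
    simp only [← Matrix.diag_apply, hdiag, Matrix.cons_val_zero, Matrix.cons_val_one,
      Matrix.cons_val_two, Matrix.tail_cons, Matrix.head_cons, map_neg, sub_neg_eq_add, map_one]
    ring
  · rw [hJac, Matrix.spectrum_of_isLowerTriangular _ hlower, hdiag]
    simp only [Matrix.range_cons, Matrix.range_empty, Set.union_empty, Set.singleton_union]
    rw [Set.insert_comm, Set.pair_comm]
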